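/- Let R be a fusion ring with basis B and fusion subsets S, T. Consider the operator T̂ on R ⊗ ℝ given by x ↦ R_S · x · R_T, where R_S, R_T are the regular elements of S and T. Then the matrix of T̂ in the basis B is symmetric: the coefficient of X_j in T̂(X_i) equals the coefficient of X_i in T̂(X_j) for all X_i, X_j ∈ B. -/
import Mathlib


open Finset

/-- A fusion ring with distinguished basis indexed by `ι`: nonnegative integer structure
constants `N`, unit basis element `one`, involution `star`, and the Frobenius–Perron
dimension `fp`, the (unique) ring homomorphism to `ℝ` positive on the basis. -/
structure FusionRing (ι : Type) [Fintype ι] [DecidableEq ι] where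
  N : ι → ι → ι → ℕ
  one : ι
  star : ι → ι
  assoc : ∀ a b c d, ∑ x, N a b x * N x c d = ∑ x, N b c x * N a x d
  one_mul : ∀ a b, N one a b = if a = b then 1 else 0
  mul_one : ∀ a b, N a one b = if a = b then 1 else 0
  star_invol : ∀ a, star (star a) = a
  N_one : ∀ a b, N a b one = if b = star a then 1 else 0
  N_star : ∀ a b c, N a b c = N (star b) (star a) (star c)
  fp : ι → ℝ
  fp_pos : ∀ a, 0 < fp a
  fp_one : fp one = 1
  fp_hom : ∀ a b, fp a * fp b = ∑ c, (N a b c : ℝ) * fp c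

namespace FusionRing

variable {ι : Type} [Fintype ι] [DecidableEq ι] (R : FusionRing ι)

set_option linter.unusedVariables false
open scoped Classical

/-- Multiplication of `R ⊗ ℝ`, written on coefficient vectors in the basis `ι`. -/
noncomputable def mul (x y : ι → ℝ) : ι → ℝ :=
  fun c => ∑ a, ∑ b, x a * y b * (R.N a b c : ℝ)

/-- The basis element `a` viewed as a coefficient vector. -/
def e (R : FusionRing ι) (a : ι) : ι → ℝ := fun c => if c = a then 1 else 0

/-- The linear extension of the involution `*`. -/
def starVec (x : ι → ℝ) : ι → ℝ := fun c => x (R.star c)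

/-- The standard bilinear form, `m(a,b) = δ_{a,b}` on basis elements. -/
def m (R : FusionRing ι) (x y : ι → ℝ) : ℝ := ∑ a, x a * y a

/-- `S` is the basis of a fusion subring: contains the unit, closed under `*`, and closed
under taking constituents of products. -/
def IsFusionSubset (S : Finset ι) : Prop :=
  R.one ∈ S ∧ (∀ a ∈ S, R.star a ∈ S) ∧ ∀ a ∈ S, ∀ b ∈ S, ∀ c, 0 < R.N a b c → c ∈ S

/-- The regular element `R_S = ∑_{d ∈ S} FPdim(d)·d` of a fusion subset `S`. -/
def reg (S : Finset ι) : ι → ℝ := fun c => if c ∈ S then R.fp c else 0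

/-- `FPdim(S) = ∑_{d ∈ S} FPdim(d)²`. -/
def fpdimS (S : Finset ι) : ℝ := ∑ d ∈ S, R.fp d ^ 2

/-- The double coset relation relative to fusion subsets `S`, `T`:
`X ∼ Y` iff `Y` occurs with positive multiplicity in `D·X·E` for some `D ∈ S`, `E ∈ T`. -/
def dcRel (S T : Finset ι) (X Y : ι) : Prop :=
  ∃ D ∈ S, ∃ E ∈ T, 0 < ∑ a, R.N D X a * R.N a E Y

/-- `A_i = ∑_{Y ∈ Λ_i} FPdim(Y)·Y` where `Λ_i` is the double coset of `X`. -/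
noncomputable def classVec (S T : Finset ι) (X : ι) : ι → ℝ :=
  fun c => if R.dcRel S T X c then R.fp c else 0

end FusionRing

namespace FusionRing

variable {ι : Type} [Fintype ι] [DecidableEq ι] (R : FusionRing ι)

lemma N_one' (x c : ι) : R.N x c R.one = if x = R.star c then 1 else 0 := by
  rw [R.N_one]
  congr 1
  simp only [eq_iff_iff]
  constructor
  · intro h; rw [h, R.star_invol]
  · intro h; rw [h, R.star_invol]

lemma cyc (a b c : ι) : R.N a b c = R.N b (R.star c) (R.star a) := by
  have h := R.assoc a b (R.star c) R.one
  have l1 : ∀ x : ι, R.N x (R.star c) R.one = if x = c then 1 else 0 := fun x => by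
    rw [N_one', R.star_invol]
  have l2 : ∀ x : ι, R.N a x R.one = if x = R.star a then 1 else 0 := fun x => R.N_one a x
  simp only [l1, l2, mul_ite, mul_one, mul_zero, Finset.sum_ite_eq',
    Finset.mem_univ, if_true] at h
  simpa using h

lemma frob (a b c : ι) : R.N (R.star a) c b = R.N a b c := by
  rw [cyc R (R.star a) c b, R.star_invol, cyc R a b c]
  rw [R.N_star c (R.star b) a, R.star_invol]

lemma aux1 (p b j : ι) : R.N p b j = R.N j (R.star b) p := by
  rw [cyc R j (R.star b) p]
  exact R.N_star p b j

lemma fp_star (a : ι) : R.fp (R.star a) = R.fp a := by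
  have hD : (0:ℝ) < ∑ b, R.fp b ^ 2 :=
    Finset.sum_pos (fun b _ => pow_pos (R.fp_pos b) 2) ⟨R.one, Finset.mem_univ _⟩
  have e1 : ∑ b, ∑ c, (R.N a b c : ℝ) * R.fp c * R.fp b = R.fp a * ∑ b, R.fp b ^ 2 := by
    rw [Finset.mul_sum]
    refine Finset.sum_congr rfl fun b _ => ?_
    rw [← Finset.sum_mul, ← R.fp_hom a b]
    ring
  have e2 : ∑ b, ∑ c, (R.N a b c : ℝ) * R.fp c * R.fp b
      = R.fp (R.star a) * ∑ c, R.fp c ^ 2 := by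
    rw [Finset.sum_comm, Finset.mul_sum]
    refine Finset.sum_congr rfl fun c _ => ?_
    have key : ∀ b, (R.N a b c : ℝ) = (R.N (R.star a) c b : ℝ) := fun b => by
      rw [frob]
    simp_rw [key]
    have e3 : ∑ b, (R.N (R.star a) c b : ℝ) * R.fp c * R.fp b
        = (∑ b, (R.N (R.star a) c b : ℝ) * R.fp b) * R.fp c := by
      rw [Finset.sum_mul]; refine Finset.sum_congr rfl fun b _ => ?_; ring
    rw [e3, ← R.fp_hom (R.star a) c]
    ring
  exact mul_right_cancel₀ (ne_of_gt hD) (e2.symm.trans e1)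

lemma swap (a b i j : ι) :
    ∑ p, R.N a i p * R.N p b j = ∑ p, R.N (R.star a) j p * R.N p (R.star b) i := by
  have h1 : ∑ p, R.N a i p * R.N p b j
      = ∑ p, R.N j (R.star b) p * R.N (R.star a) p i := by
    refine Finset.sum_congr rfl fun p _ => ?_
    rw [← frob R a i p, aux1 R p b j]
    ring
  rw [h1]
  exact (R.assoc (R.star a) j (R.star b) i).symm

lemma reg_star {S : Finset ι} (hS : R.IsFusionSubset S) (a : ι) :
    R.reg S (R.star a) = R.reg S a := by
  unfold reg
  by_cases h : a ∈ S
  · rw [if_pos (hS.2.1 a h), if_pos h, fp_star]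
  · rw [if_neg, if_neg h]
    intro hc
    exact h (by have := hS.2.1 _ hc; rwa [R.star_invol] at this)

lemma expand (S T : Finset ι) (i j : ι) :
    R.mul (R.mul (R.reg S) (R.e i)) (R.reg T) j
      = ∑ a, ∑ b, R.reg S a * R.reg T b * ∑ p, (R.N a i p : ℝ) * (R.N p b j : ℝ) := by
  unfold mul e
  have hin : ∀ p, (∑ a, ∑ b, R.reg S a * (if b = i then (1:ℝ) else 0) * (R.N a b p : ℝ))
      = ∑ a, R.reg S a * (R.N a i p : ℝ) := by
    intro p
    refine Finset.sum_congr rfl fun a _ => ?_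
    rw [Finset.sum_eq_single i]
    · simp
    · intro b _ hb; simp [hb]
    · simp
  simp_rw [hin, Finset.sum_mul, Finset.mul_sum]
  have tri : ∀ (f : ι → ι → ι → ℝ), ∑ p, ∑ b, ∑ a, f p b a = ∑ a, ∑ b, ∑ p, f p b a := by
    intro f
    rw [Finset.sum_comm]
    rw [show (∑ b, ∑ p, ∑ a, f p b a) = ∑ b, ∑ a, ∑ p, f p b a from
      Finset.sum_congr rfl fun b _ => Finset.sum_comm]
    exact Finset.sum_comm
  rw [tri fun p b a => R.reg S a * (R.N a i p : ℝ) * R.reg T b * (R.N p b j : ℝ)]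
  refine Finset.sum_congr rfl fun a _ => Finset.sum_congr rfl fun b _ =>
    Finset.sum_congr rfl fun p _ => by ring

end FusionRing

/-- The matrix of the operator `x ↦ R_S·x·R_T` on `R ⊗ ℝ` in the standard basis is
symmetric: the coefficient of `j` in `R_S·i·R_T` equals the coefficient of `i` in
`R_S·j·R_T`. -/
theorem dc_operator_symm {ι : Type} [Fintype ι] [DecidableEq ι] (R : FusionRing ι)
    (S T : Finset ι) (hS : R.IsFusionSubset S) (hT : R.IsFusionSubset T) (i j : ι) :
    R.mul (R.mul (R.reg S) (R.e i)) (R.reg T) j =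
      R.mul (R.mul (R.reg S) (R.e j)) (R.reg T) i := by
  rw [R.expand S T i j, R.expand S T j i]
  have step : ∀ a b : ι, (∑ p, (R.N a i p : ℝ) * (R.N p b j : ℝ))
      = ∑ p, (R.N (R.star a) j p : ℝ) * (R.N p (R.star b) i : ℝ) := by
    intro a b
    exact_mod_cast congrArg (Nat.cast : ℕ → ℝ) (R.swap a b i j)
  have h1 : ∑ a, ∑ b, R.reg S a * R.reg T b * ∑ p, (R.N a i p : ℝ) * (R.N p b j : ℝ)
      = ∑ a, ∑ b, R.reg S (R.star a) * R.reg T (R.star b)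
          * ∑ p, (R.N a j p : ℝ) * (R.N p b i : ℝ) := by
    simp_rw [step]
    have reidx : ∀ (F : ι → ℝ), ∑ a, F (R.star a) = ∑ a, F a := fun F =>
      Equiv.sum_comp (Function.Involutive.toPerm R.star R.star_invol) F
    conv_rhs => rw [← reidx (fun a => ∑ b, R.reg S (R.star a) * R.reg T (R.star b)
          * ∑ p, (R.N a j p : ℝ) * (R.N p b i : ℝ))]
    refine Finset.sum_congr rfl fun a _ => ?_
    conv_rhs => rw [← reidx (fun b => R.reg S (R.star (R.star a)) * R.reg T (R.star b)
          * ∑ p, (R.N (R.star a) j p : ℝ) * (R.N p b i : ℝ))]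
    simp only [R.star_invol]
  rw [h1]
  refine Finset.sum_congr rfl fun a _ => Finset.sum_congr rfl fun b _ => ?_
  rw [R.reg_star hS, R.reg_star hT]
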